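/- Let E be a measurable space, ℓ, N natural numbers with N ≥ 2ℓ ≥ 2, φ : E^ℓ → ℝ a bounded measurable function, and f^N a Borel probability measure on E^N that is symmetric (invariant under permutations of the N coordinates). Then | ∫_{E^N} ⟨(μ^N_V)^{⊗ℓ}, φ⟩ df^N(V) − ∫_{E^N} φ(v_1,…,v_ℓ) df^N(V) | ≤ 2ℓ²‖φ‖_∞/N, where ⟨(μ^N_V)^{⊗ℓ}, φ⟩ := N^{−ℓ} Σ_{(i_1,…,i_ℓ) ∈ {1,…,N}^ℓ} φ(v_{i_1},…,v_{i_ℓ}). -/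

import Mathlib

/-!
The ℓ-fold tensor power of the empirical measure averages `∫ φ (v_{g 1}, …, v_{g ℓ}) df^N` over
all maps `g : Fin ℓ → Fin N`. By symmetry of `f^N`, every injective `g` contributes exactly
`∫ φ (v_1, …, v_ℓ) df^N`, and every other term is within `2 ‖φ‖_∞` of it. The non-injective maps
form a fraction `1 - N (N - 1) ⋯ (N - ℓ + 1) / N^ℓ ≤ ℓ² / N` of all maps.
-/

open MeasureTheory Finset Function Fintype

theorem Nat.sub_mul_descFactorial_le_descFactorial_succ (N k : ℕ) :
    ((N : ℝ) - k) * N.descFactorial k ≤ N.descFactorial (k + 1) := by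
  rw [Nat.descFactorial_succ, Nat.cast_mul]
  gcongr
  rcases le_total k N with h | h
  · rw [Nat.cast_sub h]
  · simp only [Nat.sub_eq_zero_of_le h, Nat.cast_zero, sub_nonpos]
    exact_mod_cast h

theorem Nat.pow_sub_descFactorial_mul_le (N k : ℕ) :
    ((N : ℝ) ^ k - N.descFactorial k) * N ≤ (k : ℝ) ^ 2 * N ^ k := by
  induction k with
  | zero => simp
  | succ k ih =>
    have hdF := N.sub_mul_descFactorial_le_descFactorial_succ k
    have hdF_le : (N.descFactorial k : ℝ) ≤ (N : ℝ) ^ k := by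
      exact_mod_cast Nat.descFactorial_le_pow N k
    have hN : (0 : ℝ) ≤ N := N.cast_nonneg
    calc ((N : ℝ) ^ (k + 1) - N.descFactorial (k + 1)) * N
        ≤ ((N : ℝ) ^ (k + 1) - (N - k) * N.descFactorial k) * N := by gcongr
      _ = N * (((N : ℝ) ^ k - N.descFactorial k) * N) + k * N.descFactorial k * N := by ring
      _ ≤ N * ((k : ℝ) ^ 2 * N ^ k) + k * N ^ k * N := by gcongr
      _ = ((k : ℝ) ^ 2 + k) * N ^ (k + 1) := by ring
      _ ≤ ((k + 1 : ℕ) : ℝ) ^ 2 * N ^ (k + 1) := by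
        gcongr
        push_cast
        nlinarith

theorem Fintype.card_not_injective (α β : Type*) [Fintype α] [Fintype β] [DecidableEq α]
    [DecidableEq β] :
    #{g : α → β | ¬ Injective g} = card β ^ card α - (card β).descFactorial (card α) := by
  have hinj : #{g : α → β | Injective g} = (card β).descFactorial (card α) := by
    rw [← Fintype.card_subtype, Fintype.card_congr (Equiv.subtypeInjectiveEquivEmbedding α β),
      Fintype.card_embedding_eq]
  rw [← hinj, ← Fintype.card_fun, ← Finset.card_univ, ← Finset.card_filter_add_card_filter_not
    (s := univ) (fun g : α → β => Injective g)]
  omega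

theorem Fin.card_not_injective_div_le (ℓ N : ℕ) :
    (#{g : Fin ℓ → Fin N | ¬ Injective g} : ℝ) / N ^ ℓ ≤ ℓ ^ 2 / N := by
  have hcard : (#{g : Fin ℓ → Fin N | ¬ Injective g} : ℝ) = N ^ ℓ - N.descFactorial ℓ := by
    rw [Fintype.card_not_injective, Fintype.card_fin, Fintype.card_fin,
      Nat.cast_sub (Nat.descFactorial_le_pow N ℓ), Nat.cast_pow]
  rw [hcard]
  rcases N.eq_zero_or_pos with rfl | hN
  · rcases ℓ.eq_zero_or_pos with rfl | hℓ
    · simp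
    · simp [hℓ.ne']
  · rw [div_le_div_iff₀ (by positivity) (by positivity)]
    exact N.pow_sub_descFactorial_mul_le ℓ

theorem abs_inv_card_mul_sum_sub_le {α : Type*} [Fintype α] [Nonempty α] (p : α → Prop)
    [DecidablePred p] (a : α → ℝ) {c D : ℝ} (hp : ∀ x, p x → a x = c)
    (hD : ∀ x, |a x - c| ≤ D) :
    |(card α : ℝ)⁻¹ * ∑ x, a x - c| ≤ #{x | ¬ p x} / card α * D := by
  have hcard : (0 : ℝ) < card α := by exact_mod_cast Fintype.card_pos
  have hsum : ∑ x with ¬ p x, (a x - c) = ∑ x, (a x - c) :=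
    sum_filter_of_ne fun x _ hx hpx => hx (by rw [hp x hpx, sub_self])
  have hmean : (card α : ℝ)⁻¹ * ∑ x, a x - c = (card α : ℝ)⁻¹ * ∑ x, (a x - c) := by
    rw [sum_sub_distrib, sum_const, card_univ, nsmul_eq_mul]
    field_simp
  calc |(card α : ℝ)⁻¹ * ∑ x, a x - c| = (card α : ℝ)⁻¹ * |∑ x with ¬ p x, (a x - c)| := by
        rw [hmean, hsum, abs_mul, abs_of_pos (inv_pos.2 hcard)]
    _ ≤ (card α : ℝ)⁻¹ * (#{x | ¬ p x} * D) := by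
        gcongr
        calc |∑ x with ¬ p x, (a x - c)| ≤ ∑ x with ¬ p x, |a x - c| := abs_sum_le_sum_abs _ _
          _ ≤ #{x | ¬ p x} * D := by
            simpa using sum_le_card_nsmul _ _ _ fun x _ => hD x
    _ = #{x | ¬ p x} / card α * D := by ring

theorem integral_comp_injective_eq {ι κ E G : Type*} [MeasurableSpace E] [Finite κ]
    [NormedAddCommGroup G] [NormedSpace ℝ G] {μ : Measure (ι → E)}
    (hμ : ∀ σ : Equiv.Perm ι, μ.map (fun V => V ∘ σ) = μ) (F : (κ → E) → G)
    {g h : κ → ι} (hg : Injective g) (hh : Injective h) :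
    ∫ V, F (V ∘ g) ∂μ = ∫ V, F (V ∘ h) ∂μ := by
  obtain ⟨σ, hσ⟩ := Equiv.Perm.exists_extending_pair h g hh hg
  let e : (ι → E) ≃ᵐ (ι → E) := MeasurableEquiv.arrowCongr' σ.symm (MeasurableEquiv.refl E)
  have he : ⇑e = fun V => V ∘ σ := rfl
  calc ∫ V, F (V ∘ g) ∂μ = ∫ V, F (e V ∘ h) ∂μ := by
        congr with V
        simp [he, comp_def, hσ]
    _ = ∫ V, F (V ∘ h) ∂μ := by rw [← integral_map_equiv e (fun V => F (V ∘ h)), he, hμ]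

theorem stmt11 {E : Type*} [MeasurableSpace E] (ℓ N : ℕ) (hN : 2 * ℓ ≤ N)
    (φ : (Fin ℓ → E) → ℝ) (hφm : Measurable φ) (B : ℝ) (hB : ∀ x, |φ x| ≤ B)
    (fN : Measure (Fin N → E)) (hfN : IsProbabilityMeasure fN)
    (hsym : ∀ σ : Equiv.Perm (Fin N), fN.map (fun V => V ∘ σ) = fN) :
    |(∫ V, ((N : ℝ) ^ ℓ)⁻¹ * ∑ g : Fin ℓ → Fin N, φ (fun i => V (g i)) ∂fN)
      - ∫ V, φ (fun i => V (Fin.castLE (by omega) i)) ∂fN|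
      ≤ 2 * (ℓ : ℝ) ^ 2 * B / N := by
  classical
  have hℓN : ℓ ≤ N := by omega
  let I (g : Fin ℓ → Fin N) : ℝ := ∫ V, φ (fun i => V (g i)) ∂fN
  have hφ_bdd (g : Fin ℓ → Fin N) : ∀ᵐ V ∂fN, ‖φ (fun i => V (g i))‖ ≤ B :=
    ae_of_all _ fun V => hB _
  have hI_abs (g : Fin ℓ → Fin N) : |I g| ≤ B := by
    simpa using norm_integral_le_of_norm_le_const (hφ_bdd g)
  have hI_sub (g : Fin ℓ → Fin N) : |I g - I (Fin.castLE hℓN)| ≤ 2 * B := by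
    linarith [abs_sub (I g) (I (Fin.castLE hℓN)), hI_abs g, hI_abs (Fin.castLE hℓN)]
  have hI_inj (g : Fin ℓ → Fin N) (hg : Injective g) : I g = I (Fin.castLE hℓN) :=
    integral_comp_injective_eq hsym φ hg (Fin.castLE_injective hℓN)
  have hint (g : Fin ℓ → Fin N) : Integrable (fun V => φ (fun i => V (g i))) fN :=
    (integrable_const B).mono'
      (hφm.comp (measurable_pi_lambda _ fun i => measurable_pi_apply _)).aestronglyMeasurable
      (hφ_bdd g)
  have : Nonempty (Fin ℓ → Fin N) := ⟨Fin.castLE hℓN⟩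
  have hmean := abs_inv_card_mul_sum_sub_le Injective I hI_inj hI_sub
  simp only [card_fun, Fintype.card_fin, Nat.cast_pow] at hmean
  rw [integral_const_mul, integral_finsetSum _ fun g _ => hint g]
  calc _ ≤ _ := hmean
    _ ≤ ℓ ^ 2 / N * (2 * B) :=
        mul_le_mul_of_nonneg_right (Fin.card_not_injective_div_le ℓ N)
          ((abs_nonneg _).trans (hI_sub (Fin.castLE hℓN)))
    _ = 2 * ℓ ^ 2 * B / N := by ring
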